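/- arXiv:1004.1082 — 5 statements merged into one kernel-verified Lean document; each statement's English description precedes it below -/
import Mathlib

section
/- Let V be a finite-dimensional real inner product space and L : V → V a linear operator, with adjoint Lᵗ. Then the following three conditions are equivalent: (i) there exists λ ∈ ℝ such that L + Lᵗ = 2λ·id (equivalently L = λ·id + (L − Lᵗ)/2); (ii) for all Z, W ∈ V with ‖Z‖ = ‖W‖ one has ⟨LZ, Z⟩ = ⟨LW, W⟩; (iii) for all Z, W ∈ V with ‖Z‖ = ‖W‖ = 1 and ⟨Z, W⟩ = 0 one has ⟨LZ, Z⟩ − ⟨LW, W⟩ = 0 and ⟨LZ, W⟩ + ⟨LW, Z⟩ = 0. (This is Lemma 3.3 of the paper, with the sign in the second equation of (iii) corrected so that it expresses the vanishing of the off-diagonal entries of the symmetric part of L.) -/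
open scoped RealInnerProductSpace

/-!
The symmetric part `S = L + Lᵗ` satisfies `⟪S Z, W⟫ = ⟪L Z, W⟫ + ⟪L W, Z⟫`, so all
three conditions are statements about `S`. (i) ⇒ (ii) because the quadratic form of `L`
is then `λ ‖Z‖²`; (ii) ⇒ (iii) by polarization, since `Z + W` and `Z - W` have equal
norms for orthogonal `Z, W`. For (iii) ⇒ (i), `S Z` is orthogonal to `Zᗮ`, hence lies
in `ℝ ∙ Z`; an operator for which every vector is an eigenvector is a homothety.
-/

namespace LinearMap

variable {V : Type*} [NormedAddCommGroup V] [InnerProductSpace ℝ V]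

theorem inner_add_adjoint_apply [FiniteDimensional ℝ V] (L : V →ₗ[ℝ] V) (z w : V) :
    ⟪(L + adjoint L) z, w⟫ = ⟪L z, w⟫ + ⟪L w, z⟫ := by
  rw [add_apply, inner_add_left, adjoint_inner_left, real_inner_comm z]

theorem inner_apply_eq_zero_of_inner_eq_zero {T : V →ₗ[ℝ] V}
    (hT : ∀ z w : V, ‖z‖ = 1 → ‖w‖ = 1 → ⟪z, w⟫ = 0 → ⟪T z, w⟫ = 0)
    (z w : V) (hzw : ⟪z, w⟫ = 0) : ⟪T z, w⟫ = 0 := by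
  rcases eq_or_ne z 0 with rfl | hz
  · simp
  rcases eq_or_ne w 0 with rfl | hw
  · simp
  have hunit := hT (‖z‖⁻¹ • z) (‖w‖⁻¹ • w) (norm_smul_inv_norm hz)
    (norm_smul_inv_norm hw)
    (by rw [real_inner_smul_left, real_inner_smul_right, hzw, mul_zero, mul_zero])
  rw [map_smul, real_inner_smul_left, real_inner_smul_right] at hunit
  simpa [hz, hw] using hunit

theorem apply_mem_span_singleton_of_inner_eq_zero {T : V →ₗ[ℝ] V}
    (hT : ∀ z w : V, ⟪z, w⟫ = 0 → ⟪T z, w⟫ = 0) (v : V) : T v ∈ ℝ ∙ v := by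
  rw [← Submodule.orthogonal_orthogonal (ℝ ∙ v), Submodule.mem_orthogonal]
  intro u hu
  rw [real_inner_comm]
  exact hT v u (Submodule.mem_orthogonal_singleton_iff_inner_right.mp hu)

theorem exists_eq_smul_id_of_inner_eq_zero {T : V →ₗ[ℝ] V}
    (hT : ∀ z w : V, ⟪z, w⟫ = 0 → ⟪T z, w⟫ = 0) : ∃ c : ℝ, T = c • id := by
  refine exists_eq_smul_id_of_forall_notLinearIndependent fun v hindep => ?_
  obtain ⟨a, ha⟩ :=
    Submodule.mem_span_singleton.mp (apply_mem_span_singleton_of_inner_eq_zero hT v)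
  have hv : v ≠ 0 := by
    rintro rfl
    simpa using hindep.ne_zero 0
  exact (LinearIndependent.pair_iff' hv).mp hindep a ha

end LinearMap

/-- Lemma 3.3: for a linear operator `L` on a finite-dimensional real inner product
space, the following are equivalent: (i) `L + Lᵗ = 2λ·id` for some real `λ`;
(ii) `⟪LZ, Z⟫ = ⟪LW, W⟫` whenever `‖Z‖ = ‖W‖`; (iii) for orthonormal pairs `Z, W`,
`⟪LZ, Z⟫ - ⟪LW, W⟫ = 0` and `⟪LZ, W⟫ + ⟪LW, Z⟫ = 0`. -/
theorem lemma_trivial_tfae {V : Type*} [NormedAddCommGroup V] [InnerProductSpace ℝ V]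
    [FiniteDimensional ℝ V] (L : V →ₗ[ℝ] V) :
    List.TFAE
      [ (∃ l : ℝ, L + LinearMap.adjoint L = (2 * l) • (LinearMap.id : V →ₗ[ℝ] V)),
        (∀ Z W : V, ‖Z‖ = ‖W‖ → ⟪L Z, Z⟫ = ⟪L W, W⟫),
        (∀ Z W : V, ‖Z‖ = 1 → ‖W‖ = 1 → ⟪Z, W⟫ = 0 →
          ⟪L Z, Z⟫ - ⟪L W, W⟫ = 0 ∧ ⟪L Z, W⟫ + ⟪L W, Z⟫ = 0) ] := by
  tfae_have 1 → 2 := by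
    rintro ⟨l, hl⟩ Z W hZW
    have hquad (v : V) : ⟪L v, v⟫ = l * ‖v‖ ^ 2 := by
      have h := L.inner_add_adjoint_apply v v
      rw [hl, LinearMap.smul_apply, LinearMap.id_apply, real_inner_smul_left,
        real_inner_self_eq_norm_sq] at h
      linarith
    rw [hquad, hquad, hZW]
  tfae_have 2 → 3 := by
    intro h Z W hZ hW hZW
    refine ⟨sub_eq_zero.mpr (h Z W (hZ.trans hW.symm)), ?_⟩
    have hpol := h (Z + W) (Z - W)
      (norm_sub_eq_norm_add (by rwa [real_inner_comm])).symm
    simp only [map_add, map_sub, inner_add_left, inner_add_right, inner_sub_left,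
      inner_sub_right] at hpol
    linarith
  tfae_have 3 → 1 := by
    intro h
    obtain ⟨c, hc⟩ := LinearMap.exists_eq_smul_id_of_inner_eq_zero
      (LinearMap.inner_apply_eq_zero_of_inner_eq_zero fun z w hz hw hzw => by
        rw [L.inner_add_adjoint_apply]
        exact (h z w hz hw hzw).2)
    exact ⟨c / 2, by rw [hc, mul_div_cancel₀ c two_ne_zero]⟩
  tfae_finish
end

section
/- Let V be a nonzero finite-dimensional complex inner product space, L : V → V a normal linear operator, and λ ∈ ℂ such that every eigenvalue of L is equal to λ or to the complex conjugate of λ (i.e. the spectrum of L is contained in {λ, conj λ}). Then L + L* = 2·Re(λ)·id; equivalently, L = Re(λ)·id + (L − L*)/2, so the self-adjoint part of L is the scalar Re(λ). (Abstract form of Lemma 10.3: a normal operator ad_H on the generalized root space n_{α,β}, whose complexification has only the roots λ = α + iβ and its conjugate, satisfies ad_H = α(H)·I + (ad_H − ad_H*)/2.) -/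
/-!
The operator `S = L + L*` is self-adjoint and commutes with `L`, so each eigenspace of `S` is
`L`-invariant and therefore contains an eigenvector `w` of `L`, say `L w = ν • w`. Normality gives
`L* w = conj ν • w`, hence `S w = 2 Re ν • w`, and `Re ν = Re λ` by hypothesis. Thus `2 Re λ` is the
only eigenvalue of `S`, and a self-adjoint operator with a single eigenvalue is that scalar.
-/

open LinearMap Module.End

namespace Module.End

variable {K V : Type*} [Field K] [IsAlgClosed K] [AddCommGroup V] [Module K V]
  [FiniteDimensional K V]

theorem exists_hasEigenvector_mem_eigenspace_of_commute {f g : End K V} (hfg : Commute f g)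
    {μ : K} (hμ : f.HasEigenvalue μ) : ∃ ν v, g.HasEigenvector ν v ∧ v ∈ f.eigenspace μ := by
  have : Nontrivial (f.eigenspace μ) := Submodule.nontrivial_iff_ne_bot.mpr hμ
  obtain ⟨ν, hν⟩ := exists_eigenvalue (g.restrict (mapsTo_genEigenspace_of_comm hfg μ 1))
  obtain ⟨w, hw⟩ := hν.exists_hasEigenvector
  refine ⟨ν, w, ⟨?_, ?_⟩, w.2⟩
  · exact mem_eigenspace_iff.mpr (congrArg Subtype.val hw.apply_eq_smul)
  · exact_mod_cast hw.2

end Module.End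

namespace LinearMap

variable {𝕜 E : Type*} [RCLike 𝕜] [NormedAddCommGroup E] [InnerProductSpace 𝕜 E]
  [FiniteDimensional 𝕜 E]

theorem norm_adjoint_apply_of_isStarNormal {T : E →ₗ[𝕜] E} [hT : IsStarNormal T] (v : E) :
    ‖adjoint T v‖ = ‖T v‖ := by
  have hinner : inner 𝕜 (adjoint T v) (adjoint T v) = inner 𝕜 (T v) (T v) := by
    rw [adjoint_inner_right, ← comp_apply, ← mul_eq_comp, ← star_eq_adjoint,
      ← hT.star_comm_self.eq, mul_apply, star_eq_adjoint, adjoint_inner_left]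
  rw [← sq_eq_sq₀ (norm_nonneg _) (norm_nonneg _), ← RCLike.ofReal_inj (K := 𝕜)]
  push_cast
  rwa [← inner_self_eq_norm_sq_to_K, ← inner_self_eq_norm_sq_to_K]

theorem adjoint_apply_eq_conj_smul_of_isStarNormal {T : E →ₗ[𝕜] E} [IsStarNormal T]
    {ν : 𝕜} {v : E} (hv : T v = ν • v) : adjoint T v = starRingEnd 𝕜 ν • v := by
  have : IsStarNormal (T - ν • 1) :=
    Commute.isStarNormal_sub (by simpa using (Commute.one_right T).smul_right _)
  have hnorm := norm_adjoint_apply_of_isStarNormal (T := T - ν • 1) v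
  rw [← star_eq_adjoint, star_sub, star_smul, star_one] at hnorm
  simpa [hv, star_eq_adjoint, sub_eq_zero] using hnorm

theorem IsSymmetric.eq_smul_id_of_forall_hasEigenvalue {T : E →ₗ[𝕜] E} (hT : T.IsSymmetric)
    {c : 𝕜} (hc : ∀ μ, HasEigenvalue T μ → μ = c) : T = c • id := by
  let b := hT.eigenvectorBasis rfl
  refine b.toBasis.ext fun i => ?_
  simp only [OrthonormalBasis.coe_toBasis, smul_apply, id_apply]
  rw [hT.apply_eigenvectorBasis, hc _ (hT.hasEigenvalue_eigenvalues rfl i)]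

end LinearMap

theorem normal_operator_selfadjoint_part_scalar_general {V : Type*} [NormedAddCommGroup V]
    [InnerProductSpace ℂ V] [FiniteDimensional ℂ V]
    (L : V →ₗ[ℂ] V) (l : ℂ)
    (hnormal : L ∘ₗ LinearMap.adjoint L = LinearMap.adjoint L ∘ₗ L)
    (heig : ∀ μ : ℂ, Module.End.HasEigenvalue (L : Module.End ℂ V) μ →
      μ = l ∨ μ = (starRingEnd ℂ) l) :
    L + LinearMap.adjoint L = (2 * (l.re : ℂ)) • (LinearMap.id : V →ₗ[ℂ] V) := by
  have : IsStarNormal L := ⟨hnormal.symm⟩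
  have hS : (L + adjoint L).IsSymmetric :=
    (isSymmetric_iff_isSelfAdjoint _).mpr (IsSelfAdjoint.add_star_self L)
  refine hS.eq_smul_id_of_forall_hasEigenvalue fun μ hμ => ?_
  obtain ⟨ν, w, hw, hwμ⟩ :=
    exists_hasEigenvector_mem_eigenspace_of_commute ((Commute.refl L).add_left star_comm_self) hμ
  have hSw : (L + adjoint L) w = (2 * (ν.re : ℂ)) • w := by
    rw [LinearMap.add_apply, hw.apply_eq_smul,
      adjoint_apply_eq_conj_smul_of_isStarNormal hw.apply_eq_smul, ← add_smul,
      Complex.add_conj, Complex.ofReal_mul, Complex.ofReal_ofNat]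
  have hνl : ν.re = l.re := by
    rcases heig ν (hasEigenvalue_of_hasEigenvector hw) with rfl | rfl <;> simp
  rw [← hνl]
  exact smul_left_injective ℂ hw.2 ((mem_eigenspace_iff.mp hwμ).symm.trans hSw)

/-- Abstract form of Lemma 10.3: a normal operator `L` on a nonzero finite-dimensional
complex inner product space whose eigenvalues are all equal to `λ` or `conj λ`
satisfies `L + L* = 2 Re(λ) · id`. -/
theorem normal_operator_selfadjoint_part_scalar {V : Type*} [NormedAddCommGroup V]
    [InnerProductSpace ℂ V] [FiniteDimensional ℂ V] [Nontrivial V]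
    (L : V →ₗ[ℂ] V) (l : ℂ)
    (hnormal : L ∘ₗ LinearMap.adjoint L = LinearMap.adjoint L ∘ₗ L)
    (heig : ∀ μ : ℂ, Module.End.HasEigenvalue (L : Module.End ℂ V) μ →
      μ = l ∨ μ = (starRingEnd ℂ) l) :
    L + LinearMap.adjoint L = (2 * (l.re : ℂ)) • (LinearMap.id : V →ₗ[ℂ] V) :=
  normal_operator_selfadjoint_part_scalar_general L l hnormal heig
end

section
/- Let a, b, α, β, x, y be real numbers. On the 4-dimensional real vector space with basis {A, B, Z, W}, let ⁅·,·⁆ be the unique antisymmetric bilinear bracket determined on basis pairs by ⁅A,B⁆ = aA + bB, ⁅A,Z⁆ = αZ + βW, ⁅A,W⁆ = −βZ + αW, ⁅B,Z⁆ = xZ + yW, ⁅B,W⁆ = −yZ + xW, and ⁅Z,W⁆ = 0. Then this bracket satisfies the Jacobi identity (and hence defines a Lie algebra structure) if and only if aα + bx = 0 and aβ + by = 0. -/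
/-! The jacobiator `J u v w` of an alternating bracket is an alternating trilinear map, so it
vanishes iff it vanishes on the four increasing basis triples. Since `𝔪 = span {Z, W}` is abelian
and invariant under `ad A` and `ad B`, `J A Z W = J B Z W = 0`. On `𝔪`, `ad A` and `ad B` act as
the commuting complex scalars `α + iβ` and `x + iy`, so `J A B = [ad A, ad B] - ad ⁅A, B⁆` acts
there as `-(a (α + iβ) + b (x + iy))`, which vanishes iff `aα + bx = aβ + by = 0`. -/

section Jacobiator

variable {R M : Type*} [CommRing R] [AddCommGroup M] [Module R M]

def jacobiator (L : M →ₗ[R] M →ₗ[R] M) : M →ₗ[R] M →ₗ[R] M →ₗ[R] M :=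
  LinearMap.mk₂ R (fun u v => L u ∘ₗ L v + L v ∘ₗ L.flip u + L.flip (L u v))
    (fun u u' v => by ext w; simp; abel)
    (fun c u v => by ext w; simp)
    (fun u v v' => by ext w; simp; abel)
    (fun c u v => by ext w; simp)

variable (L : M →ₗ[R] M →ₗ[R] M)

@[simp]
theorem jacobiator_apply (u v w : M) :
    jacobiator L u v w = L u (L v w) + L v (L w u) + L w (L u v) := rfl

theorem jacobiator_eq_zero_iff :
    jacobiator L = 0 ↔ ∀ u v w, L u (L v w) + L v (L w u) + L w (L u v) = 0 := by
  simp only [LinearMap.ext_iff, jacobiator_apply, LinearMap.zero_apply]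

theorem jacobiator_rotate (u v w : M) : jacobiator L u v w = jacobiator L v w u := by
  simp only [jacobiator_apply]; abel

variable {L}

theorem jacobiator_self_left (hL : L.IsAlt) (u w : M) : jacobiator L u u w = 0 := by
  rw [jacobiator_apply, hL.self_eq_zero, map_zero, add_zero, ← map_add, ← hL.neg w u,
    neg_add_cancel, map_zero]

theorem jacobiator_self_right (hL : L.IsAlt) (u v : M) : jacobiator L u v v = 0 := by
  rw [jacobiator_rotate, jacobiator_self_left hL]

end Jacobiator

theorem eq_zero_of_antisymm_of_lt {ι M : Type*} [LinearOrder ι] [AddCommGroup M]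
    {g : ι → ι → ι → M} (h₁₂ : ∀ i j k, g i j k = -g j i k) (h₂₃ : ∀ i j k, g i j k = -g i k j)
    (hii : ∀ i k, g i i k = 0) (hlt : ∀ i j k, i < j → j < k → g i j k = 0) (i j k : ι) :
    g i j k = 0 := by
  rcases lt_trichotomy i j with hij | rfl | hji
  · rcases lt_trichotomy j k with hjk | rfl | hkj
    · exact hlt i j k hij hjk
    · rw [h₁₂, h₂₃, hii, neg_zero, neg_zero]
    · rcases lt_trichotomy i k with hik | rfl | hki
      · rw [h₂₃, hlt i k j hik hkj, neg_zero]
      · rw [h₂₃, hii, neg_zero]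
      · rw [h₂₃, h₁₂, hlt k i j hki hij, neg_zero, neg_zero]
  · exact hii i k
  · rcases lt_trichotomy i k with hik | rfl | hki
    · rw [h₁₂, hlt j i k hji hik, neg_zero]
    · rw [h₂₃, hii, neg_zero]
    · rcases lt_trichotomy j k with hjk | rfl | hkj
      · rw [h₁₂, h₂₃, hlt j k i hjk hki, neg_zero, neg_zero]
      · rw [h₁₂, h₂₃, hii, neg_zero, neg_zero]
      · rw [h₁₂, h₂₃, h₁₂, hlt k j i hkj hji, neg_zero, neg_zero, neg_zero]

theorem LinearMap.eq_zero_of_alternating_of_basis_lt {ι R M N : Type*} [LinearOrder ι]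
    [CommRing R] [AddCommGroup M] [Module R M] [AddCommGroup N] [Module R N]
    (f : M →ₗ[R] M →ₗ[R] M →ₗ[R] N) (b : Module.Basis ι R M)
    (hl : ∀ u w, f u u w = 0) (hr : ∀ u, (f u).IsAlt)
    (hlt : ∀ i j k, i < j → j < k → f (b i) (b j) (b k) = 0) : f = 0 := by
  have h₁₂ (u v w : M) : f u v w = -f v u w := by
    have h := hl (u + v) w
    simp only [map_add, LinearMap.add_apply, hl, zero_add, add_zero] at h
    exact eq_neg_of_add_eq_zero_right h
  refine b.ext fun i => b.ext fun j => b.ext fun k => ?_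
  exact eq_zero_of_antisymm_of_lt (g := fun i j k => f (b i) (b j) (b k))
    (fun _ _ _ => h₁₂ _ _ _) (fun _ _ _ => ((hr _).neg _ _).symm) (fun _ _ => hl _ _) hlt i j k

section StructureConstants

variable {R V : Type*} [CommRing R] [AddCommGroup V] [Module R V] {L : V →ₗ[R] V →ₗ[R] V}
  {A B Z W : V} {a b α β x y : R}

theorem jacobiator_A_B_Z (hL : L.IsAlt) (hAB : L A B = a • A + b • B)
    (hAZ : L A Z = α • Z + β • W) (hAW : L A W = -β • Z + α • W)
    (hBZ : L B Z = x • Z + y • W) (hBW : L B W = -y • Z + x • W) :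
    jacobiator L A B Z = -((a * α + b * x) • Z + (a * β + b * y) • W) := by
  simp only [jacobiator_apply, ← hL.neg A Z, ← hL.neg B Z, hAB, hAZ, hAW, hBZ, hBW, map_add,
    map_smul, map_neg]
  module

theorem jacobiator_A_B_W (hL : L.IsAlt) (hAB : L A B = a • A + b • B)
    (hAZ : L A Z = α • Z + β • W) (hAW : L A W = -β • Z + α • W)
    (hBZ : L B Z = x • Z + y • W) (hBW : L B W = -y • Z + x • W) :
    jacobiator L A B W = (a * β + b * y) • Z - (a * α + b * x) • W := by
  simp only [jacobiator_apply, ← hL.neg A W, ← hL.neg B W, hAB, hAZ, hAW, hBZ, hBW, map_add,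
    map_smul, map_neg]
  module

theorem jacobiator_eq_zero_of_invariant_abelian {T : V} {p q r s : R}
    (hL : L.IsAlt) (hTZ : L T Z = p • Z + q • W) (hTW : L T W = r • Z + s • W) (hZW : L Z W = 0) :
    jacobiator L T Z W = 0 := by
  simp only [jacobiator_apply, ← hL.neg T W, hTZ, hTW, hZW, ← hL.neg Z W, hL.self_eq_zero,
    map_add, map_smul, map_neg, map_zero]
  module

end StructureConstants

/-- The case `dim(𝔞,𝔨,𝔪) = (2,0,2)`: the antisymmetric bilinear bracket on the
4-dimensional real vector space with basis `{A, B, Z, W}` (here `e 0 = A`, `e 1 = B`,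
`e 2 = Z`, `e 3 = W`) determined by `⁅A,B⁆ = aA + bB`, `⁅A,Z⁆ = αZ + βW`,
`⁅A,W⁆ = −βZ + αW`, `⁅B,Z⁆ = xZ + yW`, `⁅B,W⁆ = −yZ + xW`, `⁅Z,W⁆ = 0` satisfies
the Jacobi identity iff `aα + bx = 0` and `aβ + by = 0`. -/
theorem jacobi_iff_dim_2_0_2 {V : Type*} [AddCommGroup V] [Module ℝ V]
    (e : Module.Basis (Fin 4) ℝ V) (a b α β x y : ℝ)
    (B : V →ₗ[ℝ] V →ₗ[ℝ] V)
    (hanti : ∀ u v : V, B u v = - B v u)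
    (hAB : B (e 0) (e 1) = a • e 0 + b • e 1)
    (hAZ : B (e 0) (e 2) = α • e 2 + β • e 3)
    (hAW : B (e 0) (e 3) = -β • e 2 + α • e 3)
    (hBZ : B (e 1) (e 2) = x • e 2 + y • e 3)
    (hBW : B (e 1) (e 3) = -y • e 2 + x • e 3)
    (hZW : B (e 2) (e 3) = 0) :
    (∀ u v w : V, B u (B v w) + B v (B w u) + B w (B u v) = 0) ↔
      (a * α + b * x = 0 ∧ a * β + b * y = 0) := by
  have : IsAddTorsionFree V := .of_isTorsionFree ℝ V
  have hB : B.IsAlt := fun u => self_eq_neg.mp (hanti u u)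
  have hABZ := jacobiator_A_B_Z hB hAB hAZ hAW hBZ hBW
  have hABW := jacobiator_A_B_W hB hAB hAZ hAW hBZ hBW
  rw [← jacobiator_eq_zero_iff]
  constructor
  · intro hJ
    simp only [hJ, LinearMap.zero_apply, zero_eq_neg] at hABZ
    have hm : LinearIndependent ℝ ![e 2, e 3] := by
      convert e.linearIndependent.comp ![2, 3] (by decide) using 1
      ext i; fin_cases i <;> rfl
    exact LinearIndependent.pair_iff.mp hm _ _ hABZ
  · rintro ⟨h₁, h₂⟩
    refine (jacobiator B).eq_zero_of_alternating_of_basis_lt e (jacobiator_self_left hB)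
      (jacobiator_self_right hB) fun i j k hij hjk => ?_
    have increasing_triples : ∀ i j k : Fin 4, i < j → j < k →
        i = 0 ∧ j = 1 ∧ (k = 2 ∨ k = 3) ∨ (i = 0 ∨ i = 1) ∧ j = 2 ∧ k = 3 := by decide
    obtain ⟨rfl, rfl, rfl | rfl⟩ | ⟨rfl | rfl, rfl, rfl⟩ := increasing_triples i j k hij hjk
    · rw [hABZ, h₁, h₂, zero_smul, zero_smul, add_zero, neg_zero]
    · rw [hABW, h₁, h₂, zero_smul, zero_smul, sub_zero]
    · exact jacobiator_eq_zero_of_invariant_abelian hB hAZ hAW hZW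
    · exact jacobiator_eq_zero_of_invariant_abelian hB hBZ hBW hZW
end

section
/- Let a, b, λ, μ, α, β, x, y, θ be real numbers satisfying θ·(λ − 2α) = 0, θ·(μ − 2x) = 0, aα + bx = 0, aβ + by = 0, and aλ + bμ = 0. Then the 5-dimensional real Lie algebra 𝔤 with basis {A, B, X, Z, W} and bracket determined by ⁅A,B⁆ = aA + bB, ⁅A,X⁆ = λX, ⁅B,X⁆ = μX, ⁅A,Z⁆ = αZ + βW, ⁅A,W⁆ = −βZ + αW, ⁅B,Z⁆ = xZ + yW, ⁅B,W⁆ = −yZ + xW, ⁅Z,W⁆ = θX, ⁅X,Z⁆ = ⁅X,W⁆ = 0 (and antisymmetry) is solvable. -/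
/-!
Put `𝔫 = span {X, Z, W}`. Every bracket of basis vectors lies in `ℝ⁅A,B⁆ + 𝔫`, and the
conditions `aα + bx = aβ + by = aλ + bμ = 0` say precisely that `⁅A,B⁆ = aA + bB` commutes
with `X`, `Z` and `W`. Hence the derived series descends through `ℝ⁅A,B⁆ + 𝔫`, `𝔫`, `ℝX`
(as `⁅X,Z⁆ = ⁅X,W⁆ = 0`) and reaches `0` at the fourth step.
-/

open LieAlgebra Submodule

section
variable {R L : Type*} [CommRing R] [LieRing L] [LieAlgebra R L]

theorem lie_mem_of_mem_span {s t : Set L} {T : Submodule R L}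
    (h : ∀ a ∈ s, ∀ b ∈ t, ⁅a, b⁆ ∈ T) {x y : L} (hx : x ∈ span R s) (hy : y ∈ span R t) :
    ⁅x, y⁆ ∈ T := by
  induction hx, hy using span_induction₂ with
  | mem_mem a b ha hb => exact h a ha b hb
  | zero_left => simp
  | zero_right => simp
  | add_left _ _ _ _ _ _ h₁ h₂ => rw [add_lie]; exact add_mem h₁ h₂
  | add_right _ _ _ _ _ _ h₁ h₂ => rw [lie_add]; exact add_mem h₁ h₂
  | smul_left r _ _ _ _ h => rw [smul_lie]; exact smul_mem _ r h
  | smul_right r _ _ _ _ h => rw [lie_smul]; exact smul_mem _ r h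

theorem lie_mem_of_mem_span_range {ι : Type*} [LinearOrder ι] {f : ι → L} {T : Submodule R L}
    (h : ∀ i j, i < j → ⁅f i, f j⁆ ∈ T) {x y : L} (hx : x ∈ span R (Set.range f))
    (hy : y ∈ span R (Set.range f)) : ⁅x, y⁆ ∈ T := by
  refine lie_mem_of_mem_span ?_ hx hy
  rintro _ ⟨i, rfl⟩ _ ⟨j, rfl⟩
  rcases lt_trichotomy i j with hij | rfl | hji
  · exact h i j hij
  · simp
  · rw [← lie_skew]
    exact neg_mem (h j i hji)

theorem LieAlgebra.toSubmodule_derivedSeries_succ_le {k : ℕ} {ι : Type*} [LinearOrder ι]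
    {f : ι → L} {T : Submodule R L}
    (hk : (derivedSeries R L k).toSubmodule ≤ span R (Set.range f))
    (h : ∀ i j, i < j → ⁅f i, f j⁆ ∈ T) : (derivedSeries R L (k + 1)).toSubmodule ≤ T := by
  rw [derivedSeries_def, derivedSeriesOfIdeal_succ, LieSubmodule.lieIdeal_oper_eq_linear_span',
    span_le]
  rintro _ ⟨x, hx, y, hy, rfl⟩
  exact lie_mem_of_mem_span_range h (hk hx) (hk hy)

end

theorem solvable_dim_2_1_2_general {L : Type*} [LieRing L] [LieAlgebra ℝ L]
    (e : Module.Basis (Fin 5) ℝ L) (a b lam μ α β x y θ : ℝ)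
    (h3 : a * α + b * x = 0) (h4 : a * β + b * y = 0) (h5 : a * lam + b * μ = 0)
    (hAB : ⁅e 0, e 1⁆ = a • e 0 + b • e 1)
    (hAX : ⁅e 0, e 2⁆ = lam • e 2)
    (hBX : ⁅e 1, e 2⁆ = μ • e 2)
    (hAZ : ⁅e 0, e 3⁆ = α • e 3 + β • e 4)
    (hAW : ⁅e 0, e 4⁆ = -β • e 3 + α • e 4)
    (hBZ : ⁅e 1, e 3⁆ = x • e 3 + y • e 4)
    (hBW : ⁅e 1, e 4⁆ = -y • e 3 + x • e 4)
    (hXZ : ⁅e 2, e 3⁆ = (0 : L))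
    (hXW : ⁅e 2, e 4⁆ = (0 : L))
    (hZW : ⁅e 3, e 4⁆ = θ • e 2) :
    LieAlgebra.IsSolvable L := by
  have hABX : ⁅⁅e 0, e 1⁆, e 2⁆ = 0 := by
    rw [hAB, add_lie, smul_lie, smul_lie, hAX, hBX]
    linear_combination (norm := module) h5 • e 2
  have hABZ : ⁅⁅e 0, e 1⁆, e 3⁆ = 0 := by
    rw [hAB, add_lie, smul_lie, smul_lie, hAZ, hBZ]
    linear_combination (norm := module) h3 • e 3 + h4 • e 4
  have hABW : ⁅⁅e 0, e 1⁆, e 4⁆ = 0 := by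
    rw [hAB, add_lie, smul_lie, smul_lie, hAW, hBW]
    linear_combination (norm := module) -h4 • e 3 + h3 • e 4
  have d0 : (derivedSeries ℝ L 0).toSubmodule ≤ span ℝ (Set.range e) := by simp [e.span_eq]
  have d1 := toSubmodule_derivedSeries_succ_le d0
    (T := span ℝ (Set.range ![⁅e 0, e 1⁆, e 2, e 3, e 4])) (by
      intro i j hij
      fin_cases i <;> fin_cases j <;> simp [hAX, hBX, hAZ, hAW, hBZ, hBW, hXZ, hXW, hZW] at hij ⊢
      all_goals repeat' first
        | (apply subset_span; simp; done) | apply add_mem | apply neg_mem | apply smul_mem)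
  have d2 := toSubmodule_derivedSeries_succ_le d1 (T := span ℝ (Set.range ![e 2, e 3, e 4])) (by
      intro i j hij
      fin_cases i <;> fin_cases j <;> simp [hABX, hABZ, hABW, hXZ, hXW, hZW] at hij ⊢
      exact smul_mem _ _ (subset_span (by simp)))
  have d3 := toSubmodule_derivedSeries_succ_le d2 (T := span ℝ (Set.range ![e 2])) (by
      intro i j hij
      fin_cases i <;> fin_cases j <;> simp [hXZ, hXW, hZW] at hij ⊢
      exact smul_mem _ _ (mem_span_singleton_self _))
  have d4 := toSubmodule_derivedSeries_succ_le d3 (T := ⊥)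
    (fun i j hij => absurd hij (Subsingleton.elim i j).not_lt)
  exact (isSolvable_iff ℝ L).2 ⟨4, by simpa using d4⟩

/-- The 5-dimensional real Lie algebra of the case `dim(𝔞,𝔨,𝔪) = (2,1,2)`, with basis
`{A, B, X, Z, W}` (here `e 0 = A`, `e 1 = B`, `e 2 = X`, `e 3 = Z`, `e 4 = W`) and
bracket `⁅A,B⁆ = aA + bB`, `⁅A,X⁆ = λX`, `⁅B,X⁆ = μX`, `⁅A,Z⁆ = αZ + βW`,
`⁅A,W⁆ = −βZ + αW`, `⁅B,Z⁆ = xZ + yW`, `⁅B,W⁆ = −yZ + xW`, `⁅Z,W⁆ = θX`,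
`⁅X,Z⁆ = ⁅X,W⁆ = 0`, where `θ(λ − 2α) = 0`, `θ(μ − 2x) = 0`, `aα + bx = 0`,
`aβ + by = 0` and `aλ + bμ = 0`, is solvable. -/
theorem solvable_dim_2_1_2 {L : Type*} [LieRing L] [LieAlgebra ℝ L]
    (e : Module.Basis (Fin 5) ℝ L) (a b lam μ α β x y θ : ℝ)
    (h1 : θ * (lam - 2 * α) = 0) (h2 : θ * (μ - 2 * x) = 0)
    (h3 : a * α + b * x = 0) (h4 : a * β + b * y = 0) (h5 : a * lam + b * μ = 0)
    (hAB : ⁅e 0, e 1⁆ = a • e 0 + b • e 1)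
    (hAX : ⁅e 0, e 2⁆ = lam • e 2)
    (hBX : ⁅e 1, e 2⁆ = μ • e 2)
    (hAZ : ⁅e 0, e 3⁆ = α • e 3 + β • e 4)
    (hAW : ⁅e 0, e 4⁆ = -β • e 3 + α • e 4)
    (hBZ : ⁅e 1, e 3⁆ = x • e 3 + y • e 4)
    (hBW : ⁅e 1, e 4⁆ = -y • e 3 + x • e 4)
    (hXZ : ⁅e 2, e 3⁆ = (0 : L))
    (hXW : ⁅e 2, e 4⁆ = (0 : L))
    (hZW : ⁅e 3, e 4⁆ = θ • e 2) :
    LieAlgebra.IsSolvable L :=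
  solvable_dim_2_1_2_general e a b lam μ α β x y θ h3 h4 h5 hAB hAX hBX hAZ hAW hBZ hBW hXZ hXW hZW
end

section
/- Let n ≥ 1 and α, β be real numbers. On the (n+3)-dimensional real vector space with basis {A, X₁, …, Xₙ, Z, W}, let ⁅·,·⁆ be the unique antisymmetric bilinear bracket determined on basis pairs by ⁅A,X_k⁆ = X_k for 1 ≤ k ≤ n, ⁅A,Z⁆ = αZ + βW, ⁅A,W⁆ = −βZ + αW, ⁅Z,W⁆ = X₁, and all other brackets of basis vectors equal to zero. Then this bracket satisfies the Jacobi identity (and hence defines a Lie algebra structure) if and only if α = 1/2. -/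
/-!
The Jacobi expression is trilinear, so it vanishes identically iff it vanishes on basis
triples, where it is computed from the structure constants. The only triple on which it can
fail is `(A, Z, W)`: there `⁅A,⁅Z,W⁆⁆ + ⁅Z,⁅W,A⁆⁆ + ⁅W,⁅A,Z⁆⁆ = X₁ - α X₁ - α X₁ = (1 - 2α) X₁`.
-/

namespace LinearMap

variable {R M : Type*} [CommSemiring R] [AddCommMonoid M] [Module R M]

def jacobiator (B : M →ₗ[R] M →ₗ[R] M) : M →ₗ[R] M →ₗ[R] M →ₗ[R] M :=
  mk₂ R (fun u v => B u ∘ₗ B v + B v ∘ₗ B.flip u + B.flip (B u v))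
    (fun _ _ _ => by ext; simp only [map_add, add_apply, comp_apply, flip_apply]; abel)
    (fun _ _ _ => by ext; simp only [map_smul, add_apply, smul_apply, comp_apply, flip_apply,
      smul_add])
    (fun _ _ _ => by ext; simp only [map_add, add_apply, comp_apply, flip_apply]; abel)
    (fun _ _ _ => by ext; simp only [map_smul, add_apply, smul_apply, comp_apply, flip_apply,
      smul_add])

theorem jacobiator_apply (B : M →ₗ[R] M →ₗ[R] M) (u v w : M) :
    jacobiator B u v w = B u (B v w) + B v (B w u) + B w (B u v) :=
  rfl

theorem jacobi_identity_iff_of_basis {ι : Type*} (e : Module.Basis ι R M)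
    (B : M →ₗ[R] M →ₗ[R] M) :
    (∀ u v w : M, B u (B v w) + B v (B w u) + B w (B u v) = 0) ↔
      ∀ i j k : ι, B (e i) (B (e j) (e k)) + B (e j) (B (e k) (e i)) +
        B (e k) (B (e i) (e j)) = 0 := by
  refine ⟨fun h i j k => h _ _ _, fun h u v w => ?_⟩
  have hJ : jacobiator B = 0 := e.ext fun i => e.ext fun j => e.ext fun k => h i j k
  simpa only [jacobiator_apply, zero_apply] using LinearMap.congr_fun (congr_fun₂ hJ u v) w

theorem apply_self_eq_zero_of_antisymm {K V : Type*} [Field K] [CharZero K] [AddCommGroup V]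
    [Module K V] (B : V →ₗ[K] V →ₗ[K] V) (hanti : ∀ u v : V, B u v = - B v u) (u : V) :
    B u u = 0 :=
  have := IsAddTorsionFree.of_isTorsionFree K V
  self_eq_neg.mp (hanti u u)

end LinearMap

namespace Example92

variable {V : Type*} [AddCommGroup V] [Module ℝ V] {n : ℕ} (hn : 1 ≤ n)
  (e : Module.Basis (Fin n ⊕ Fin 3) ℝ V) (α β : ℝ) (B : V →ₗ[ℝ] V →ₗ[ℝ] V)

theorem jacobi_A_Z_W (hanti : ∀ u v : V, B u v = - B v u)
    (hAX : ∀ k : Fin n, B (e (.inr 0)) (e (.inl k)) = e (.inl k))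
    (hAZ : B (e (.inr 0)) (e (.inr 1)) = α • e (.inr 1) + β • e (.inr 2))
    (hAW : B (e (.inr 0)) (e (.inr 2)) = -β • e (.inr 1) + α • e (.inr 2))
    (hZW : B (e (.inr 1)) (e (.inr 2)) = e (.inl ⟨0, hn⟩)) :
    B (e (.inr 0)) (B (e (.inr 1)) (e (.inr 2))) + B (e (.inr 1)) (B (e (.inr 2)) (e (.inr 0))) +
      B (e (.inr 2)) (B (e (.inr 0)) (e (.inr 1))) = (1 - 2 * α) • e (.inl ⟨0, hn⟩) := by
  have hself := B.apply_self_eq_zero_of_antisymm hanti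
  have hWZ : B (e (.inr 2)) (e (.inr 1)) = -e (.inl ⟨0, hn⟩) := by rw [hanti, hZW]
  rw [hanti (e (.inr 2)) (e (.inr 0)), hZW, hAX, hAW, hAZ]
  simp only [map_neg, map_add, map_smul, hself, hZW, hWZ, smul_zero]
  module

theorem jacobi_basis_of_alpha_eq_half (hanti : ∀ u v : V, B u v = - B v u)
    (hAX : ∀ k : Fin n, B (e (.inr 0)) (e (.inl k)) = e (.inl k))
    (hAZ : B (e (.inr 0)) (e (.inr 1)) = (1 / 2 : ℝ) • e (.inr 1) + β • e (.inr 2))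
    (hAW : B (e (.inr 0)) (e (.inr 2)) = -β • e (.inr 1) + (1 / 2 : ℝ) • e (.inr 2))
    (hXX : ∀ k l : Fin n, B (e (.inl k)) (e (.inl l)) = 0)
    (hXZ : ∀ k : Fin n, B (e (.inl k)) (e (.inr 1)) = 0)
    (hXW : ∀ k : Fin n, B (e (.inl k)) (e (.inr 2)) = 0)
    (hZW : B (e (.inr 1)) (e (.inr 2)) = e (.inl ⟨0, hn⟩)) (i j k : Fin n ⊕ Fin 3) :
    B (e i) (B (e j) (e k)) + B (e j) (B (e k) (e i)) + B (e k) (B (e i) (e j)) = 0 := by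
  have hself := B.apply_self_eq_zero_of_antisymm hanti
  have hXA (k : Fin n) : B (e (.inl k)) (e (.inr 0)) = -e (.inl k) := by rw [hanti, hAX]
  have hZA : B (e (.inr 1)) (e (.inr 0)) = -((1 / 2 : ℝ) • e (.inr 1) + β • e (.inr 2)) := by
    rw [hanti, hAZ]
  have hWA : B (e (.inr 2)) (e (.inr 0)) = -(-β • e (.inr 1) + (1 / 2 : ℝ) • e (.inr 2)) := by
    rw [hanti, hAW]
  have hZX (k : Fin n) : B (e (.inr 1)) (e (.inl k)) = 0 := by rw [hanti, hXZ, neg_zero]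
  have hWX (k : Fin n) : B (e (.inr 2)) (e (.inl k)) = 0 := by rw [hanti, hXW, neg_zero]
  have hWZ : B (e (.inr 2)) (e (.inr 1)) = -e (.inl ⟨0, hn⟩) := by rw [hanti, hZW]
  rcases i with i | i <;> rcases j with j | j <;> rcases k with k | k <;>
    (try fin_cases i) <;> (try fin_cases j) <;> (try fin_cases k) <;>
    simp only [Fin.zero_eta, Fin.mk_one, Fin.reduceFinMk, Fin.isValue, hAX, hAZ, hAW, hXX, hXZ,
      hXW, hZW, hXA, hZA, hWA, hZX, hWX, hWZ, hself, map_add, map_smul, map_neg, map_zero,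
      smul_zero, neg_zero, add_zero] <;>
    module

end Example92

/-- Basis encoding: `e (.inr 0) = A`, `e (.inl k) = X_k`, `e (.inr 1) = Z`, `e (.inr 2) = W`. -/
theorem jacobi_iff_example_9_2 {V : Type*} [AddCommGroup V] [Module ℝ V]
    (n : ℕ) (hn : 1 ≤ n) (e : Module.Basis (Fin n ⊕ Fin 3) ℝ V)
    (α β : ℝ)
    (B : V →ₗ[ℝ] V →ₗ[ℝ] V)
    (hanti : ∀ u v : V, B u v = - B v u)
    (hAX : ∀ k : Fin n, B (e (.inr 0)) (e (.inl k)) = e (.inl k))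
    (hAZ : B (e (.inr 0)) (e (.inr 1)) = α • e (.inr 1) + β • e (.inr 2))
    (hAW : B (e (.inr 0)) (e (.inr 2)) = -β • e (.inr 1) + α • e (.inr 2))
    (hXX : ∀ k l : Fin n, B (e (.inl k)) (e (.inl l)) = 0)
    (hXZ : ∀ k : Fin n, B (e (.inl k)) (e (.inr 1)) = 0)
    (hXW : ∀ k : Fin n, B (e (.inl k)) (e (.inr 2)) = 0)
    (hZW : B (e (.inr 1)) (e (.inr 2)) = e (.inl ⟨0, hn⟩)) :
    (∀ u v w : V, B u (B v w) + B v (B w u) + B w (B u v) = 0) ↔ α = 1 / 2 := by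
  rw [LinearMap.jacobi_identity_iff_of_basis e]
  constructor
  · intro hJ
    have h := hJ (.inr 0) (.inr 1) (.inr 2)
    rw [Example92.jacobi_A_Z_W hn e α β B hanti hAX hAZ hAW hZW] at h
    have := (smul_eq_zero.mp h).resolve_right (e.ne_zero _)
    linarith
  · rintro rfl
    exact Example92.jacobi_basis_of_alpha_eq_half hn e β B hanti hAX hAZ hAW hXX hXZ hXW hZW
end
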